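/- Let n ≥ 1, let f : [0,1]^n → [0,1) be increasing, and let k ≥ 0 be an integer. Consider the partition of [0,1)^{n+1} into the 2^{k(n+1)} dyadic boxes of side length 2^{−k}. Then the (n+1)-dimensional Lebesgue measure of the union of those boxes that f crosses is at most (n+1)·2^{−k}. -/

import Mathlib

/-!
Write `B b = ⌊2^k f(b / 2^k)⌋` for `b` in the grid `{0, …, 2^k - 1}^n`. By monotonicity of `f`, a
crossing box with base index `b` has its last index between `B b` and `B (b + 1)`, so there are
at most `∑_b (B (b + 1) - B b + 1)` crossing boxes. The shift `b ↦ b + 1` maps the grid into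
itself except at the at most `n · 2^(k(n-1))` points with a coordinate equal to `2^k - 1`, where
`B ≤ 2^k`; hence the telescoping part is at most `n · 2^(kn)`, there are at most
`(n + 1) · 2^(kn)` crossing boxes, and each has volume `2^(-k(n+1))`.
-/

open MeasureTheory

/-- `f` crosses `S ⊆ ℝ^{n+1}` if both the part of `S` strictly below the graph of `f`
and the part strictly above it have positive Lebesgue measure. -/
def Crosses (n : ℕ) (f : (Fin n → ℝ) → ℝ) (S : Set (Fin (n + 1) → ℝ)) : Prop :=
  0 < volume (S ∩ {p | f (fun j => p j.castSucc) < p (Fin.last n)}) ∧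
  0 < volume (S ∩ {p | p (Fin.last n) < f (fun j => p j.castSucc)})

/-- The dyadic box indexed by `m`, whose `j`-th side is `[m j / 2 ^ e j, (m j + 1) / 2 ^ e j)`. -/
def dyadicBox (n : ℕ) (e m : Fin (n + 1) → ℕ) : Set (Fin (n + 1) → ℝ) :=
  Set.univ.pi fun j => Set.Ico ((m j : ℝ) / 2 ^ e j) ((m j + 1 : ℝ) / 2 ^ e j)

open Finset

section Grid

variable {n : ℕ}

def grid (n N : ℕ) : Finset (Fin n → ℕ) := Fintype.piFinset fun _ => range N

lemma mem_grid {N : ℕ} {b : Fin n → ℕ} : b ∈ grid n N ↔ ∀ j, b j < N := by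
  simp [grid]

lemma card_grid (n N : ℕ) : #(grid n N) = N ^ n := by
  simp [grid]

lemma init_mem_grid {N : ℕ} {m : Fin (n + 1) → ℕ} (hm : m ∈ grid (n + 1) N) :
    Fin.init m ∈ grid n N :=
  mem_grid.2 fun j => mem_grid.1 hm j.castSucc

lemma card_filter_add_one_notMem_grid_mul_le (N : ℕ) :
    #{b ∈ grid n N | b + 1 ∉ grid n N} * N ≤ n * N ^ n := by
  rcases Nat.eq_zero_or_pos N with rfl | hN
  · simp
  have hsub : {b ∈ grid n N | b + 1 ∉ grid n N} ⊆
      univ.biUnion fun j => {b ∈ grid n N | b j = N - 1} := by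
    intro b hb
    simp only [mem_filter, mem_grid, Pi.add_apply, Pi.one_apply, not_forall, not_lt] at hb
    obtain ⟨hb, j, hj⟩ := hb
    exact mem_biUnion.2 ⟨j, mem_univ _, mem_filter.2 ⟨mem_grid.2 hb, by grind⟩⟩
  calc #{b ∈ grid n N | b + 1 ∉ grid n N} * N
      ≤ (∑ j : Fin n, #{b ∈ grid n N | b j = N - 1}) * N := by
        gcongr
        exact (card_le_card hsub).trans card_biUnion_le
    _ = n * N ^ n := by
        rcases Nat.eq_zero_or_pos n with rfl | hn
        · simp
        simp only [grid, Fintype.card_filter_piFinset_const, mem_range, card_range,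
          Fintype.card_fin, sum_const, card_univ, smul_eq_mul]
        rw [if_pos (by omega), mul_assoc, pow_sub_one_mul hn.ne']

lemma sum_add_one_le {N : ℕ} {B : (Fin n → ℕ) → ℕ} (hbdd : ∀ b ∈ grid n N, B (b + 1) ≤ N) :
    ∑ b ∈ grid n N, B (b + 1) ≤
      ∑ b ∈ grid n N, B b + #{b ∈ grid n N | b + 1 ∉ grid n N} * N := by
  rw [← sum_filter_add_sum_filter_not (grid n N) (fun b => b + 1 ∈ grid n N)]
  gcongr ?_ + ?_
  · calc ∑ b ∈ grid n N with b + 1 ∈ grid n N, B (b + 1)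
        = ∑ c ∈ {b ∈ grid n N | b + 1 ∈ grid n N}.image (· + 1), B c :=
          (sum_image fun _ _ _ _ => add_right_cancel).symm
      _ ≤ ∑ b ∈ grid n N, B b :=
          sum_le_sum_of_subset (image_subset_iff.2 fun b hb => (mem_filter.1 hb).2)
  · exact sum_le_card_nsmul _ _ _ fun b hb => hbdd b (mem_filter.1 hb).1

lemma sum_card_Icc_le {N : ℕ} {B : (Fin n → ℕ) → ℕ}
    (hmono : ∀ b ∈ grid n N, B b ≤ B (b + 1)) (hbdd : ∀ b ∈ grid n N, B (b + 1) ≤ N) :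
    ∑ b ∈ grid n N, #(Icc (B b) (B (b + 1))) ≤ (n + 1) * N ^ n := by
  have hcard : ∀ b ∈ grid n N, #(Icc (B b) (B (b + 1))) + B b = B (b + 1) + 1 := by
    intro b hb
    have := hmono b hb
    rw [Nat.card_Icc]
    omega
  have hsum : ∑ b ∈ grid n N, #(Icc (B b) (B (b + 1))) + ∑ b ∈ grid n N, B b =
      ∑ b ∈ grid n N, B (b + 1) + N ^ n := by
    rw [← sum_add_distrib, sum_congr rfl hcard, sum_add_distrib, sum_const, card_grid,
      smul_eq_mul, mul_one]
  have := sum_add_one_le hbdd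
  have := card_filter_add_one_notMem_grid_mul_le (n := n) N
  linarith

end Grid

section Graph

variable {n : ℕ}

noncomputable def gridPoint (k : ℕ) (b : Fin n → ℕ) : Fin n → ℝ := fun j => (b j : ℝ) / 2 ^ k

lemma gridPoint_mono (k : ℕ) : Monotone (gridPoint (n := n) k) := fun b c h j => by
  unfold gridPoint
  gcongr
  exact h j

lemma gridPoint_mem_Icc {k : ℕ} {b : Fin n → ℕ} (hb : ∀ j, b j ≤ 2 ^ k) :
    gridPoint k b ∈ Set.Icc 0 1 := by
  refine ⟨fun j => by unfold gridPoint; positivity, fun j => ?_⟩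
  show (b j : ℝ) / 2 ^ k ≤ 1
  rw [div_le_one (by positivity)]
  exact_mod_cast hb j

lemma gridPoint_add_one_mem_Icc {k : ℕ} {b : Fin n → ℕ} (hb : b ∈ grid n (2 ^ k)) :
    gridPoint k (b + 1) ∈ Set.Icc 0 1 :=
  gridPoint_mem_Icc fun j => mem_grid.1 hb j

noncomputable def graphRow (f : (Fin n → ℝ) → ℝ) (k : ℕ) (b : Fin n → ℕ) : ℕ :=
  ⌊2 ^ k * f (gridPoint k b)⌋₊

variable {f : (Fin n → ℝ) → ℝ} {k : ℕ}

lemma graphRow_le_graphRow_add_one (hf : MonotoneOn f (Set.Icc 0 1)) {b : Fin n → ℕ}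
    (hb : b ∈ grid n (2 ^ k)) : graphRow f k b ≤ graphRow f k (b + 1) := by
  have hb' : ∀ j, b j ≤ 2 ^ k := fun j => (mem_grid.1 hb j).le
  unfold graphRow
  gcongr
  exact hf (gridPoint_mem_Icc hb') (gridPoint_add_one_mem_Icc hb)
    (gridPoint_mono k (le_add_of_nonneg_right zero_le_one))

lemma graphRow_add_one_le (hf : ∀ x ∈ Set.Icc 0 1, f x < 1) {b : Fin n → ℕ}
    (hb : b ∈ grid n (2 ^ k)) : graphRow f k (b + 1) ≤ 2 ^ k := by
  refine ((Nat.floor_lt' (by positivity)).2 ?_).le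
  push_cast
  have := hf _ (gridPoint_add_one_mem_Icc hb)
  have : (0 : ℝ) < 2 ^ k := by positivity
  nlinarith

end Graph

section Crossing

variable {n k : ℕ} {f : (Fin n → ℝ) → ℝ}

lemma init_mem_Icc_of_mem_dyadicBox {m : Fin (n + 1) → ℕ} {p : Fin (n + 1) → ℝ}
    (hp : p ∈ dyadicBox n (fun _ => k) m) :
    Fin.init p ∈ Set.Icc (gridPoint k (Fin.init m)) (gridPoint k (Fin.init m + 1)) := by
  refine ⟨fun j => (hp j.castSucc trivial).1, fun j => ?_⟩
  simpa [gridPoint, Fin.init] using (hp j.castSucc trivial).2.le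

lemma last_mem_Ico_of_mem_dyadicBox {m : Fin (n + 1) → ℕ} {p : Fin (n + 1) → ℝ}
    (hp : p ∈ dyadicBox n (fun _ => k) m) :
    p (Fin.last n) ∈ Set.Ico ((m (Fin.last n) : ℝ) / 2 ^ k) ((m (Fin.last n) + 1 : ℝ) / 2 ^ k) :=
  hp (Fin.last n) trivial

lemma Crosses.last_mem_Icc_graphRow (hf : MonotoneOn f (Set.Icc 0 1)) {m : Fin (n + 1) → ℕ}
    (hm : m ∈ grid (n + 1) (2 ^ k)) (h : Crosses n f (dyadicBox n (fun _ => k) m)) :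
    m (Fin.last n) ∈ Icc (graphRow f k (Fin.init m)) (graphRow f k (Fin.init m + 1)) := by
  have hinit := init_mem_grid hm
  have hlow := gridPoint_mem_Icc (k := k) fun j => (mem_grid.1 hinit j).le
  have hupp := gridPoint_add_one_mem_Icc hinit
  have hcube {p} (hp : p ∈ dyadicBox n (fun _ => k) m) : Fin.init p ∈ Set.Icc 0 1 :=
    Set.Icc_subset_Icc hlow.1 hupp.2 (init_mem_Icc_of_mem_dyadicBox hp)
  have hk : (0 : ℝ) < 2 ^ k := by positivity
  obtain ⟨p, hp, hpf⟩ := nonempty_of_measure_ne_zero h.1.ne'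
  obtain ⟨q, hq, hqf⟩ := nonempty_of_measure_ne_zero h.2.ne'
  have hp' := last_mem_Ico_of_mem_dyadicBox hp
  have hq' := last_mem_Ico_of_mem_dyadicBox hq
  refine mem_Icc.2 ⟨Nat.lt_succ_iff.1 ((Nat.floor_lt' (Nat.succ_ne_zero _)).2 ?_),
    Nat.le_floor ((div_le_iff₀' hk).1 ?_)⟩
  · rw [← lt_div_iff₀' hk]
    push_cast
    calc f (gridPoint k (Fin.init m))
        ≤ f (Fin.init p) := hf hlow (hcube hp) (init_mem_Icc_of_mem_dyadicBox hp).1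
      _ < p (Fin.last n) := hpf
      _ < _ := hp'.2
  · calc _ ≤ q (Fin.last n) := hq'.1
      _ ≤ f (Fin.init q) := hqf.le
      _ ≤ f (gridPoint k (Fin.init m + 1)) :=
        hf (hcube hq) hupp (init_mem_Icc_of_mem_dyadicBox hq).2

end Crossing

open Classical in
lemma card_filter_crosses_le {n : ℕ} {f : (Fin n → ℝ) → ℝ} (hf : MonotoneOn f (Set.Icc 0 1))
    (hf1 : ∀ x ∈ Set.Icc 0 1, f x < 1) (k : ℕ) :
    #{m ∈ grid (n + 1) (2 ^ k) | Crosses n f (dyadicBox n (fun _ => k) m)} ≤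
      (n + 1) * (2 ^ k) ^ n := by
  calc _ ≤ #((grid n (2 ^ k)).sigma fun b => Icc (graphRow f k b) (graphRow f k (b + 1))) := by
        refine card_le_card_of_injOn (fun m => ⟨Fin.init m, m (Fin.last n)⟩) (fun m hm => ?_) ?_
        · obtain ⟨hm, hc⟩ := mem_filter.1 hm
          exact mem_sigma.2 ⟨init_mem_grid hm, hc.last_mem_Icc_graphRow hf hm⟩
        · intro m _ m' _ h
          obtain ⟨hinit, hlast⟩ := Sigma.mk.inj_iff.1 h
          rw [← Fin.snoc_init_self m, ← Fin.snoc_init_self m', hinit, eq_of_heq hlast]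
    _ = ∑ b ∈ grid n (2 ^ k), #(Icc (graphRow f k b) (graphRow f k (b + 1))) := card_sigma _ _
    _ ≤ _ := sum_card_Icc_le (fun _ hb => graphRow_le_graphRow_add_one hf hb)
        (fun _ hb => graphRow_add_one_le hf1 hb)

lemma volume_dyadicBox (n : ℕ) (e m : Fin (n + 1) → ℕ) :
    volume (dyadicBox n e m) = ∏ j, ENNReal.ofReal ((2 ^ e j)⁻¹) := by
  rw [dyadicBox, Real.volume_pi_Ico]
  congr! 2 with j
  field_simp
  ring

theorem stmt_5_general (n : ℕ) (f : (Fin n → ℝ) → ℝ)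
    (hmono : ∀ x y : Fin n → ℝ, (∀ j, 0 ≤ x j) → (∀ j, x j ≤ y j) →
      (∀ j, y j ≤ 1) → f x ≤ f y)
    (hmem : ∀ x : Fin n → ℝ, (∀ j, 0 ≤ x j ∧ x j ≤ 1) → 0 ≤ f x ∧ f x < 1)
    (k : ℕ) :
    volume (⋃ m ∈ {m : Fin (n + 1) → ℕ |
        (∀ j, m j < 2 ^ k) ∧ Crosses n f (dyadicBox n (fun _ => k) m)},
      dyadicBox n (fun _ => k) m) ≤
      ENNReal.ofReal ((n + 1 : ℝ) * ((2 : ℝ) ^ k)⁻¹) := by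
  classical
  have hf : MonotoneOn f (Set.Icc 0 1) := fun x hx y hy hxy => hmono x y hx.1 hxy hy.2
  have hf1 : ∀ x ∈ Set.Icc 0 1, f x < 1 := fun x hx => (hmem x fun j => ⟨hx.1 j, hx.2 j⟩).2
  set F := {m ∈ grid (n + 1) (2 ^ k) | Crosses n f (dyadicBox n (fun _ => k) m)}
  have hF : {m : Fin (n + 1) → ℕ | (∀ j, m j < 2 ^ k) ∧
      Crosses n f (dyadicBox n (fun _ => k) m)} = F := by
    ext m
    simp [F, mem_grid]
  rw [hF, set_biUnion_coe]
  calc _ ≤ ∑ m ∈ F, volume (dyadicBox n (fun _ => k) m) := measure_biUnion_finset_le _ _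
    _ = #F * ENNReal.ofReal ((2 ^ k)⁻¹) ^ (n + 1) := by simp [volume_dyadicBox]
    _ ≤ ((n + 1) * (2 ^ k) ^ n : ℕ) * ENNReal.ofReal ((2 ^ k)⁻¹) ^ (n + 1) := by
        gcongr
        exact card_filter_crosses_le hf hf1 k
    _ = ENNReal.ofReal ((n + 1 : ℝ) * ((2 : ℝ) ^ k)⁻¹) := by
        rw [← ENNReal.ofReal_pow (by positivity), ← ENNReal.ofReal_natCast,
          ← ENNReal.ofReal_mul (by positivity)]
        congr 1
        push_cast
        rw [inv_pow]
        field_simp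
        ring

theorem stmt_5 (n : ℕ) (hn : 1 ≤ n) (f : (Fin n → ℝ) → ℝ)
    (hmono : ∀ x y : Fin n → ℝ, (∀ j, 0 ≤ x j) → (∀ j, x j ≤ y j) →
      (∀ j, y j ≤ 1) → f x ≤ f y)
    (hmem : ∀ x : Fin n → ℝ, (∀ j, 0 ≤ x j ∧ x j ≤ 1) → 0 ≤ f x ∧ f x < 1)
    (k : ℕ) :
    volume (⋃ m ∈ {m : Fin (n + 1) → ℕ |
        (∀ j, m j < 2 ^ k) ∧ Crosses n f (dyadicBox n (fun _ => k) m)},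
      dyadicBox n (fun _ => k) m) ≤
      ENNReal.ofReal ((n + 1 : ℝ) * ((2 : ℝ) ^ k)⁻¹) :=
  stmt_5_general n f hmono hmem k
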